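/- For every m ≥ 2, every m-free rigid word x^{e₀} t₁ x^{e₁} ⋯ t_r x^{e_r} (all eᵢ < m) is an isoterm for the variety generated by the collection of factor monoids M(w_{m,r}), r ≥ 1, where w_{m,r} = x^{m−1} t₁ x^{m−1} ⋯ t_r x^{m−1}. -/

import Mathlib

abbrev Word := List ℕ

def subst (φ : ℕ → Word) (w : Word) : Word := w.flatMap φ

inductive Deduce (S : Set (Word × Word)) : Word → Word → Prop
  | refl (w : Word) : Deduce S w w
  | symm {u v : Word} : Deduce S u v → Deduce S v u
  | trans {u v w : Word} : Deduce S u v → Deduce S v w → Deduce S u w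
  | step (a b : Word) (φ : ℕ → Word) {s t : Word} (h : (s, t) ∈ S) :
      Deduce S (a ++ subst φ s ++ b) (a ++ subst φ t ++ b)

def FM (w : Word) : Type := Option {u : Word // u <:+: w}

def fmul {w : Word} : FM w → FM w → FM w
  | some u, some v =>
      if h : (u.1 ++ v.1) <:+: w then some ⟨u.1 ++ v.1, h⟩ else none
  | _, _ => none

def fone (w : Word) : FM w := some ⟨[], List.nil_infix⟩

theorem fmul_none_left {w : Word} (a : FM w) : fmul none a = none := rfl

theorem fmul_none_right {w : Word} (a : FM w) : fmul a none = none := by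
  rcases a with _ | u <;> rfl

theorem fmul_some {w : Word} (u v : {u : Word // u <:+: w}) :
    fmul (some u) (some v) =
      if h : (u.1 ++ v.1) <:+: w then some ⟨u.1 ++ v.1, h⟩ else none := rfl

theorem fmul_assoc {w : Word} (a b c : FM w) : fmul (fmul a b) c = fmul a (fmul b c) := by
  rcases a with _ | u
  · rfl
  rcases b with _ | v
  · rfl
  rcases c with _ | t
  · show fmul _ (none : FM w) = fmul _ (fmul _ (none : FM w))
    rw [fmul_none_right]
    rfl
  rw [fmul_some, fmul_some]
  by_cases h : (u.1 ++ v.1 ++ t.1) <:+: w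
  · have h1 : (u.1 ++ v.1) <:+: w := List.IsInfix.trans ⟨[], t.1, by simp⟩ h
    have h2 : (v.1 ++ t.1) <:+: w := List.IsInfix.trans ⟨u.1, [], by simp⟩ h
    rw [dif_pos h1, fmul_some, dif_pos h2, fmul_some, dif_pos h,
      dif_pos (show (u.1 ++ (v.1 ++ t.1)) <:+: w by simpa [List.append_assoc] using h)]
    simp [List.append_assoc]
    rfl
  · by_cases h1 : (u.1 ++ v.1) <:+: w
    · rw [dif_pos h1, fmul_some, dif_neg h]
      by_cases h2 : (v.1 ++ t.1) <:+: w
      · rw [dif_pos h2, fmul_some,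
          dif_neg (fun hh => h (by simpa [List.append_assoc] using hh))]
      · rw [dif_neg h2]
        rfl
    · rw [dif_neg h1]
      erw [fmul_none_left]
      by_cases h2 : (v.1 ++ t.1) <:+: w
      · rw [dif_pos h2, fmul_some,
          dif_neg (fun hh => h1 (List.IsInfix.trans ⟨[], t.1, by simp⟩ hh))]
      · rw [dif_neg h2]
        rfl

instance (w : Word) : Monoid (FM w) where
  mul := fmul
  one := fone w
  mul_assoc := fmul_assoc
  one_mul := by
    rintro (_ | u)
    · rfl
    · show fmul (fone w) (some u) = some u
      rw [fone, fmul_some, dif_pos (by simpa using u.2)]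
      simp
      rfl
  mul_one := by
    rintro (_ | u)
    · rfl
    · show fmul (some u) (fone w) = some u
      rw [fone, fmul_some, dif_pos (by simpa using u.2)]
      simp
      rfl

def SatId (M : Type) [Monoid M] (p : Word × Word) : Prop :=
  ∀ φ : ℕ → M, (p.1.map φ).prod = (p.2.map φ).prod

def VSat (E : Set (Word × Word)) (p : Word × Word) : Prop :=
  ∀ (M : Type) [Monoid M], (∀ q ∈ E, SatId M q) → SatId M p

def ids0 : Set (Word × Word) :=
  {([0,1,2,0,3,1],[1,0,2,0,3,1]), ([0,2,0,1,3,1],[0,2,1,0,3,1]), ([0,2,1,3,0,1],[0,2,1,3,1,0])}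

def idA (n : ℕ) : Word × Word :=
  (List.replicate n 0 ++ (List.range n).map (· + 1),
   ((List.range n).map (fun i => [i + 1, 0])).flatten)

def rigid (e₀ : ℕ) (es : List ℕ) : Word :=
  List.replicate e₀ 0 ++ (es.zipIdx.map (fun p => (p.2 + 1) :: List.replicate p.1 0)).flatten

def Bword (n i : ℕ) : Word := List.replicate i 0 ++ 1 :: List.replicate (n - 1 - i) 0

def wmr (m r : ℕ) : Word := rigid (m - 1) (List.replicate r (m - 1))

/-! Substitute `x ↦ x` and `tᵢ ↦ x^(m-1-e_{i-1}) tᵢ`. Since every `eᵢ ≤ m - 1`, this sends the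
rigid word `w` to a prefix of `w_{m,r+1}`, hence to a nonzero element of `M(w_{m,r+1})`. In a factor
monoid a product of factors is their concatenation when that is again a factor and `0` otherwise, so
any `v` with `w ≈ v` is sent to the same word as `w`. The image of each letter ends in that letter,
so the substitution is injective on words and `v = w`. -/

namespace FM

/-- The Rees quotient map onto `M(W)`: non-factors of `W` go to the zero `none`. -/
def ofWord (W u : Word) : FM W := if h : u <:+: W then some ⟨u, h⟩ else none

theorem ofWord_of_infix {W u : Word} (h : u <:+: W) : ofWord W u = some ⟨u, h⟩ := dif_pos h

theorem ofWord_of_not_infix {W u : Word} (h : ¬ u <:+: W) : ofWord W u = none := dif_neg h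

theorem ofWord_nil (W : Word) : ofWord W [] = 1 := ofWord_of_infix List.nil_infix

theorem ofWord_mul_ofWord (W u v : Word) : ofWord W u * ofWord W v = ofWord W (u ++ v) := by
  by_cases hu : u <:+: W
  · by_cases hv : v <:+: W
    · rw [ofWord_of_infix hu, ofWord_of_infix hv]
      exact fmul_some _ _
    · have huv : ¬ (u ++ v) <:+: W := fun h => hv ((List.suffix_append u v).isInfix.trans h)
      rw [ofWord_of_not_infix hv, ofWord_of_not_infix huv]
      exact fmul_none_right _
  · have huv : ¬ (u ++ v) <:+: W := fun h => hu ((List.prefix_append u v).isInfix.trans h)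
    rw [ofWord_of_not_infix hu, ofWord_of_not_infix huv]
    rfl

theorem prod_map_ofWord (W : Word) (ψ : ℕ → Word) (v : Word) :
    (v.map fun c => ofWord W (ψ c)).prod = ofWord W (v.flatMap ψ) := by
  induction v with
  | nil => exact (ofWord_nil W).symm
  | cons c v ih => rw [List.map_cons, List.prod_cons, ih, ofWord_mul_ofWord, List.flatMap_cons]

theorem eq_of_ofWord_eq {W u u' : Word} (hu : u <:+: W) (h : ofWord W u = ofWord W u') :
    u = u' := by
  by_cases hu' : u' <:+: W
  · rw [ofWord_of_infix hu, ofWord_of_infix hu'] at h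
    exact congrArg Subtype.val (Option.some_injective _ h)
  · rw [ofWord_of_infix hu, ofWord_of_not_infix hu'] at h
    exact absurd h (Option.some_ne_none _)

end FM

theorem List.flatMap_injective_of_getLast? {α : Type*} {ψ : α → List α}
    (hψ : ∀ c, (ψ c).getLast? = some c) :
    Function.Injective fun v : List α => v.flatMap ψ := by
  have hne : ∀ c, ψ c ≠ [] := fun c h => by simpa [h] using hψ c
  intro v₁
  induction v₁ using List.reverseRecOn with
  | nil =>
    intro v₂ h
    obtain _ | ⟨c, v₂⟩ := v₂
    · rfl
    · exact absurd (List.flatMap_eq_nil_iff.1 h.symm c List.mem_cons_self) (hne c)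
  | append_singleton v₁ c ih =>
    intro v₂ h
    obtain rfl | ⟨v₂, d, rfl⟩ := v₂.eq_nil_or_concat
    · exact absurd (List.flatMap_eq_nil_iff.1 h c (by simp)) (hne c)
    · simp only [List.concat_eq_append, List.flatMap_append, List.flatMap_singleton] at h ⊢
      have hcd : c = d := by simpa [hψ] using congrArg List.getLast? h
      subst hcd
      rw [ih (List.append_cancel_right h)]

theorem rigid_nil (e₀ : ℕ) : rigid e₀ [] = List.replicate e₀ 0 := by
  simp [rigid]

theorem rigid_append_singleton (e₀ : ℕ) (es : List ℕ) (e : ℕ) :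
    rigid e₀ (es ++ [e]) = rigid e₀ es ++ (es.length + 1) :: List.replicate e 0 := by
  simp [rigid, List.zipIdx_append]

theorem wmr_zero (m : ℕ) : wmr m 0 = List.replicate (m - 1) 0 := rigid_nil _

theorem wmr_succ (m r : ℕ) : wmr m (r + 1) = wmr m r ++ (r + 1) :: List.replicate (m - 1) 0 := by
  rw [wmr, List.replicate_succ', rigid_append_singleton, List.length_replicate]
  rfl

theorem wmr_prefix_wmr_succ (m r : ℕ) : wmr m r <+: wmr m (r + 1) := by
  rw [wmr_succ]
  exact List.prefix_append _ _

theorem flatMap_rigid_append_replicate {m e₀ : ℕ} {es : List ℕ} (hlt : ∀ e ∈ e₀ :: es, e < m)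
    {ψ : ℕ → Word} (hψ0 : ψ 0 = [0])
    (hψ : ∀ i < es.length, ψ (i + 1) = List.replicate (m - 1 - (e₀ :: es).getD i 0) 0 ++ [i + 1]) :
    (rigid e₀ es).flatMap ψ ++ List.replicate (m - 1 - (e₀ :: es).getD es.length 0) 0 =
      wmr m es.length := by
  have hpow : ∀ n, (List.replicate n 0).flatMap ψ = List.replicate n 0 := fun n => by
    simp [List.flatMap_replicate, hψ0]
  induction es using List.reverseRecOn with
  | nil =>
    rw [rigid_nil, hpow, ← List.replicate_add, List.length_nil, wmr_zero, List.getD_cons_zero]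
    have := hlt e₀ List.mem_cons_self
    congr 1
    omega
  | append_singleton es e ih =>
    have hget : ∀ i ≤ es.length, (e₀ :: (es ++ [e])).getD i 0 = (e₀ :: es).getD i 0 :=
      fun i hi => List.getD_append (e₀ :: es) [e] 0 i (by simp; omega)
    have hlast : (e₀ :: (es ++ [e])).getD (es.length + 1) 0 = e := by simp
    have he : e < m := hlt e (by simp)
    rw [List.length_append, List.length_singleton, rigid_append_singleton, wmr_succ,
      ← ih (fun e' he' => hlt e' (by simp at he' ⊢; tauto))
        (fun i hi => (hψ i (by simp; omega)).trans (by rw [hget i hi.le])),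
      List.flatMap_append, List.flatMap_cons, hψ _ (by simp), hpow, hget _ le_rfl, hlast]
    rw [show List.replicate (m - 1) 0 = List.replicate e 0 ++ List.replicate (m - 1 - e) 0 by
      rw [← List.replicate_add, Nat.add_sub_cancel' (by omega)]]
    simp only [List.append_assoc, List.cons_append, List.nil_append]

def padSubst (m : ℕ) (E : List ℕ) : ℕ → Word
  | 0 => [0]
  | i + 1 => List.replicate (m - 1 - E.getD i 0) 0 ++ [i + 1]

theorem getLast?_padSubst (m : ℕ) (E : List ℕ) (c : ℕ) : (padSubst m E c).getLast? = some c := by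
  cases c <;> simp [padSubst]

theorem stmt13_general (m : ℕ) (e₀ : ℕ) (es : List ℕ)
    (h0 : e₀ < m) (hes : ∀ e ∈ es, e < m) :
    ∀ v : Word, (∀ r, 1 ≤ r → SatId (FM (wmr m r)) (rigid e₀ es, v)) →
      v = rigid e₀ es := by
  intro v hv
  set ψ := padSubst m (e₀ :: es)
  set W := wmr m (es.length + 1)
  have hpad := flatMap_rigid_append_replicate (List.forall_mem_cons.2 ⟨h0, hes⟩)
    (ψ := ψ) rfl fun _ _ => rfl
  have hinfix : (rigid e₀ es).flatMap ψ <:+: W :=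
    ((List.prefix_append _ _).trans (hpad ▸ wmr_prefix_wmr_succ m es.length)).isInfix
  have heval := hv (es.length + 1) (Nat.le_add_left 1 _) fun c => FM.ofWord W (ψ c)
  simp only [FM.prod_map_ofWord] at heval
  exact (List.flatMap_injective_of_getLast? (getLast?_padSubst m _)
    (FM.eq_of_ofWord_eq hinfix heval)).symm

/-- For every `m ≥ 2`, every `m`-free rigid word is an isoterm for the
variety generated by the factor monoids `M(w_{m,r})`, `r ≥ 1` (an identity holds in the
generated variety iff it holds in all the generators). -/
theorem stmt13 (m : ℕ) (hm : 2 ≤ m) (e₀ : ℕ) (es : List ℕ)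
    (h0 : e₀ < m) (hes : ∀ e ∈ es, e < m) :
    ∀ v : Word, (∀ r, 1 ≤ r → SatId (FM (wmr m r)) (rigid e₀ es, v)) →
      v = rigid e₀ es :=
  stmt13_general m e₀ es h0 hes
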